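/- Let Bob's combined payoff over three contracts be u_Bob(σ_A, σ_e) + (2m+1)·[σ_c = σ¹_B] + (4m+3)·[σ_e = σ_c], where σ_e is his strategy in the escrow contract and σ_c his strategy in the commitment contract, and |u_Bob| ≤ m. Then any pair (σ_e, σ_c) maximizing Bob's combined payoff (for fixed σ_A) satisfies σ_e = σ_c = σ¹_B. -/

import Mathlib

/-!
The two contracts pay `6m + 4` at `(σ¹_B, σ¹_B)` and at most `4m + 3` anywhere else, a gap of
`2m + 1`, while changing the escrow strategy moves `u_Bob` by at most `2m`. So no maximizer can
leave `(σ¹_B, σ¹_B)`.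
-/

theorem eq_of_forall_add_le_of_abs_le {α : Type*} (f g : α → ℝ) (m : ℝ) (p : α)
    (hf : ∀ x, |f x| ≤ m) (hgap : ∀ x ≠ p, g x + 2 * m < g p) (x : α)
    (hx : ∀ y, f y + g y ≤ f x + g x) : x = p := by
  by_contra hxp
  have hfx := abs_le.1 (hf x)
  have hfp := abs_le.1 (hf p)
  linarith [hx p, hgap x hxp]

/-- Bob's payoff from the commitment and uniqueness contracts. -/
def contractBonus {β : Type*} [DecidableEq β] (s : β) (m : ℝ) (e c : β) : ℝ :=
  (2 * m + 1) * (if c = s then 1 else 0) + (4 * m + 3) * (if e = c then 1 else 0)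

theorem contractBonus_add_lt {β : Type*} [DecidableEq β] (s : β) {m : ℝ} (hm : 0 ≤ m)
    {e c : β} (hec : (e, c) ≠ (s, s)) : contractBonus s m e c + 2 * m < contractBonus s m s s := by
  unfold contractBonus
  by_cases hc : c = s <;> by_cases he : e = c <;> simp_all <;> linarith

theorem two_auxiliary_contracts_force_strategy_general
    {SA SB : Type} [DecidableEq SB]
    (σ1B : SB) (uBob : SA → SB → ℝ) (m : ℝ)
    (hbound : ∀ σA σB, |uBob σA σB| ≤ m)
    (U : SA → SB → SB → ℝ)
    (hU : ∀ σA σe σc, U σA σe σc = uBob σA σe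
        + (2*m+1) * (if σc = σ1B then 1 else 0)
        + (4*m+3) * (if σe = σc then 1 else 0)) :
    ∀ (σA : SA) (σe σc : SB),
      (∀ σe' σc', U σA σe' σc' ≤ U σA σe σc) → σe = σ1B ∧ σc = σ1B := by
  intro σA σe σc hmax
  have hU' : ∀ p : SB × SB, U σA p.1 p.2 = uBob σA p.1 + contractBonus σ1B m p.1 p.2 := by
    intro p
    rw [hU, contractBonus, add_assoc]
  have hm : 0 ≤ m := (abs_nonneg _).trans (hbound σA σe)
  have hpair : (σe, σc) = (σ1B, σ1B) :=
    eq_of_forall_add_le_of_abs_le (fun p => uBob σA p.1) (fun p => contractBonus σ1B m p.1 p.2) m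
      (σ1B, σ1B) (fun p => hbound σA p.1) (fun p hp => contractBonus_add_lt σ1B hm hp) (σe, σc)
      (fun p => (hU' p).symm.le.trans ((hmax p.1 p.2).trans (hU' (σe, σc)).le))
  exact Prod.ext_iff.1 hpair

theorem two_auxiliary_contracts_force_strategy
    {SA SB : Type} [Nonempty SA] [Nonempty SB] [DecidableEq SB]
    (σ1B : SB) (uBob : SA → SB → ℝ) (m : ℝ) (hm : 0 < m)
    (hbound : ∀ σA σB, |uBob σA σB| ≤ m)
    (U : SA → SB → SB → ℝ)
    (hU : ∀ σA σe σc, U σA σe σc = uBob σA σe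
        + (2*m+1) * (if σc = σ1B then 1 else 0)
        + (4*m+3) * (if σe = σc then 1 else 0)) :
    ∀ (σA : SA) (σe σc : SB),
      (∀ σe' σc', U σA σe' σc' ≤ U σA σe σc) → σe = σ1B ∧ σc = σ1B :=
  two_auxiliary_contracts_force_strategy_general σ1B uBob m hbound U hU
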